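/- arXiv:1006.2260 — 2 statements merged into one kernel-verified Lean document; each statement's English description precedes it below -/
import Mathlib

section
/- Let X be a partially ordered set in which every pair of elements has an infimum (a ∧-semilattice), Y a real vector space, 𝒜₀ = {↓x : x ∈ X} where ↓x = {x' ∈ X : x' ≤ x}, and 𝔉(X,Y) = {F : X → Y : x ∼ x' implies F(x) = F(x')}. Then the map sending F ∈ 𝔉(X,Y) to the set function Φ on 𝒜₀ determined by Φ(↓x) = F(x) is a well-defined linear isomorphism from 𝔉(X,Y) onto the space of semi-additive Y-valued set functions on 𝒜₀. -/
open Finset Set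

/-- `ν(b) = (−1)^{1+|b|}` for a finite set `b` of natural numbers. -/
noncomputable def nu (b : Finset ℕ) : ℝ := (-1 : ℝ) ^ (1 + b.card)

/-- A `∩`-semilattice of sets: a nonempty family closed under finite intersections. -/
def IsCapSemilattice {X : Type*} (𝒜 : Set (Set X)) : Prop :=
  𝒜.Nonempty ∧ ∀ A ∈ 𝒜, ∀ B ∈ 𝒜, A ∩ B ∈ 𝒜

/-- A `∪`-semilattice of sets: a nonempty family closed under finite unions. -/
def IsCupSemilattice {X : Type*} (𝒜 : Set (Set X)) : Prop :=
  𝒜.Nonempty ∧ ∀ A ∈ 𝒜, ∀ B ∈ 𝒜, A ∪ B ∈ 𝒜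

/-- A lattice of sets: nonempty, closed under finite intersections and finite unions. -/
def IsSetLattice {X : Type*} (𝒜 : Set (Set X)) : Prop :=
  𝒜.Nonempty ∧ (∀ A ∈ 𝒜, ∀ B ∈ 𝒜, A ∩ B ∈ 𝒜) ∧ ∀ A ∈ 𝒜, ∀ B ∈ 𝒜, A ∪ B ∈ 𝒜

/-- A ring of sets: nonempty, closed under finite unions and set differences. -/
def IsSetRing0 {X : Type*} (𝒜 : Set (Set X)) : Prop :=
  𝒜.Nonempty ∧ (∀ A ∈ 𝒜, ∀ B ∈ 𝒜, A ∪ B ∈ 𝒜) ∧ ∀ A ∈ 𝒜, ∀ B ∈ 𝒜, A \ B ∈ 𝒜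

/-- An algebra of sets: a ring of sets containing the whole space. -/
def IsSetAlgebra0 {X : Type*} (𝒜 : Set (Set X)) : Prop :=
  IsSetRing0 𝒜 ∧ Set.univ ∈ 𝒜

/-- A set function is modular on `𝒜` if `Φ(A∪B) + Φ(A∩B) = Φ(A) + Φ(B)` for `A, B ∈ 𝒜`. -/
def Modular {X Y : Type*} [AddCommGroup Y] (𝒜 : Set (Set X)) (Φ : Set X → Y) : Prop :=
  ∀ A ∈ 𝒜, ∀ B ∈ 𝒜, Φ (A ∪ B) + Φ (A ∩ B) = Φ A + Φ B

/-- Strongly additive: modular, and vanishing at `∅` whenever `∅` belongs to the family. -/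
def StronglyAdditive {X Y : Type*} [AddCommGroup Y] (𝒜 : Set (Set X)) (Φ : Set X → Y) : Prop :=
  Modular 𝒜 Φ ∧ (∅ ∈ 𝒜 → Φ ∅ = 0)

/-- Semi-modularity on a `∩`-semilattice: whenever `A₁,…,A_N ∈ 𝒜` and `⋃ A_n ∈ 𝒜`,
`Φ(⋃_{n} A_n) = Σ_{∅≠b⊆{1,…,N}} ν(b) Φ(⋂_{n∈b} A_n)`. -/
def CapSemiModular {X Y : Type*} [AddCommGroup Y] [Module ℝ Y]
    (𝒜 : Set (Set X)) (Φ : Set X → Y) : Prop :=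
  ∀ N : ℕ, 0 < N → ∀ A : ℕ → Set X,
    (∀ n ∈ Finset.range N, A n ∈ 𝒜) → (⋃ n ∈ Finset.range N, A n) ∈ 𝒜 →
    Φ (⋃ n ∈ Finset.range N, A n) =
      ∑ b ∈ (Finset.range N).powerset.filter (· ≠ ∅), nu b • Φ (⋂ n ∈ b, A n)

/-- Semi-modularity on a `∪`-semilattice: whenever `A₁,…,A_N ∈ 𝒜` and `⋂ A_n ∈ 𝒜`,
`Φ(⋂_{n} A_n) = Σ_{∅≠b⊆{1,…,N}} ν(b) Φ(⋃_{n∈b} A_n)`. -/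
def CupSemiModular {X Y : Type*} [AddCommGroup Y] [Module ℝ Y]
    (𝒜 : Set (Set X)) (Φ : Set X → Y) : Prop :=
  ∀ N : ℕ, 0 < N → ∀ A : ℕ → Set X,
    (∀ n ∈ Finset.range N, A n ∈ 𝒜) → (⋂ n ∈ Finset.range N, A n) ∈ 𝒜 →
    Φ (⋂ n ∈ Finset.range N, A n) =
      ∑ b ∈ (Finset.range N).powerset.filter (· ≠ ∅), nu b • Φ (⋃ n ∈ b, A n)

/-- A set function on a semilattice is semi-modular if it satisfies the appropriate
semi-modularity condition for the kind(s) of semilattice its domain is. -/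
def SemiModular {X Y : Type*} [AddCommGroup Y] [Module ℝ Y]
    (𝒜 : Set (Set X)) (Φ : Set X → Y) : Prop :=
  (IsCapSemilattice 𝒜 → CapSemiModular 𝒜 Φ) ∧ (IsCupSemilattice 𝒜 → CupSemiModular 𝒜 Φ)

/-- Semi-additive: admits a semi-modular extension to `𝒜 ∪ {∅}` vanishing at `∅`. -/
def SemiAdditive {X Y : Type*} [AddCommGroup Y] [Module ℝ Y]
    (𝒜 : Set (Set X)) (Φ : Set X → Y) : Prop :=
  ∃ Ψ : Set X → Y, (∀ A ∈ 𝒜, Ψ A = Φ A) ∧ Ψ ∅ = 0 ∧ SemiModular (insert ∅ 𝒜) Ψ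

lemma nu_singleton (m : ℕ) : nu {m} = 1 := by simp [nu]

lemma nu_insert {m : ℕ} {b : Finset ℕ} (h : m ∉ b) : nu (insert m b) = -nu b := by
  simp [nu, Finset.card_insert_of_notMem h, pow_succ]
  ring

lemma key_sum {Y : Type*} [AddCommGroup Y] [Module ℝ Y] {N m : ℕ} (hm : m ∈ Finset.range N)
    (G : Finset ℕ → Y)
    (hG : ∀ b ⊆ Finset.range N, b.Nonempty → m ∉ b → G (insert m b) = G b) :
    ∑ b ∈ (Finset.range N).powerset.filter (· ≠ ∅), nu b • G b = G {m} := by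
  classical
  have hms : ({m} : Finset ℕ) ∈ (Finset.range N).powerset.filter (· ≠ ∅) := by
    simp [Finset.mem_filter, Finset.singleton_subset_iff, hm]
  rw [Finset.sum_eq_add_sum_sdiff_singleton_of_mem hms (fun b => nu b • G b)]
  set t := (Finset.range N).powerset.filter (· ≠ ∅) \ {({m} : Finset ℕ)} with ht
  have hmem : ∀ b ∈ t, b ⊆ Finset.range N ∧ b.Nonempty ∧ b ≠ {m} := by
    intro b hb
    rw [ht, Finset.mem_sdiff, Finset.mem_filter, Finset.mem_powerset, Finset.mem_singleton] at hb
    exact ⟨hb.1.1, Finset.nonempty_iff_ne_empty.2 hb.1.2, hb.2⟩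
  have herane : ∀ b ∈ t, m ∈ b → (b.erase m).Nonempty := by
    intro b hb hmb
    obtain ⟨hbN, hbne, hbm⟩ := hmem b hb
    obtain ⟨u, hu, v, hv, huv⟩ := (Finset.nontrivial_iff_ne_singleton hmb).2 hbm
    rcases eq_or_ne u m with rfl | h
    · exact ⟨v, Finset.mem_erase.2 ⟨huv.symm, hv⟩⟩
    · exact ⟨u, Finset.mem_erase.2 ⟨h, hu⟩⟩
  have g_mem : ∀ b ∈ t, (if m ∈ b then b.erase m else insert m b) ∈ t := by
    intro b hb
    obtain ⟨hbN, hbne, hbm⟩ := hmem b hb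
    rw [ht, Finset.mem_sdiff, Finset.mem_filter, Finset.mem_powerset, Finset.mem_singleton]
    by_cases hmb : m ∈ b
    · simp only [hmb, if_true]
      refine ⟨⟨fun z hz => hbN (Finset.mem_of_mem_erase hz),
        Finset.nonempty_iff_ne_empty.1 (herane b hb hmb)⟩, ?_⟩
      intro h
      have : m ∈ b.erase m := h ▸ Finset.mem_singleton_self m
      exact Finset.notMem_erase m b this
    · simp only [hmb, if_false]
      refine ⟨⟨Finset.insert_subset (by simpa using hm) hbN, Finset.insert_ne_empty _ _⟩, ?_⟩
      intro h
      obtain ⟨u, hu⟩ := hbne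
      have : u ∈ ({m} : Finset ℕ) := h ▸ Finset.mem_insert_of_mem hu
      rw [Finset.mem_singleton] at this
      exact hmb (this ▸ hu)
  have hcancel : ∀ b ∈ t, nu b • G b + nu (if m ∈ b then b.erase m else insert m b) •
      G (if m ∈ b then b.erase m else insert m b) = 0 := by
    intro b hb
    obtain ⟨hbN, hbne, hbm⟩ := hmem b hb
    by_cases hmb : m ∈ b
    · simp only [hmb, if_true]
      have hGe : G b = G (b.erase m) := by
        have := hG (b.erase m) (fun z hz => hbN (Finset.mem_of_mem_erase hz))
          (herane b hb hmb) (Finset.notMem_erase m b)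
        rw [Finset.insert_erase hmb] at this
        exact this
      have hnu : nu b = -nu (b.erase m) := by
        have h2 := nu_insert (b := b.erase m) (Finset.notMem_erase m b)
        rw [Finset.insert_erase hmb] at h2
        exact h2
      rw [hGe, hnu, neg_smul, neg_add_cancel]
    · simp only [hmb, if_false]
      rw [hG b hbN hbne hmb, nu_insert hmb, neg_smul, add_neg_cancel]
  have hne : ∀ b ∈ t, nu b • G b ≠ 0 → (if m ∈ b then b.erase m else insert m b) ≠ b := by
    intro b hb _
    by_cases hmb : m ∈ b
    · simp only [hmb, if_true]
      intro h
      rw [← h] at hmb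
      exact Finset.notMem_erase m b hmb
    · simp only [hmb, if_false]
      intro h
      rw [← h] at hmb
      exact hmb (Finset.mem_insert_self m b)
  have hinv : ∀ b (hb : b ∈ t),
      (if m ∈ (if m ∈ b then b.erase m else insert m b) then
        (if m ∈ b then b.erase m else insert m b).erase m
      else insert m (if m ∈ b then b.erase m else insert m b)) = b := by
    intro b hb
    by_cases hmb : m ∈ b
    · simp [hmb, Finset.notMem_erase, Finset.insert_erase hmb]
    · simp [hmb, Finset.mem_insert_self, Finset.erase_insert hmb]
  have hzero : ∑ b ∈ t, nu b • G b = 0 :=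
    Finset.sum_involution (fun b _ => if m ∈ b then b.erase m else insert m b)
      hcancel hne g_mem hinv
  rw [hzero, add_zero, nu_singleton, one_smul]

lemma chain_min {X : Type*} [Preorder X] (s : Finset ℕ) (hs : s.Nonempty) (x : ℕ → X)
    (hc : ∀ i ∈ s, ∀ j ∈ s, x i ≤ x j ∨ x j ≤ x i) :
    ∃ m ∈ s, ∀ n ∈ s, x m ≤ x n := by
  classical
  induction s using Finset.cons_induction with
  | empty => exact absurd hs (by simp)
  | cons a t ha ih =>
    rcases t.eq_empty_or_nonempty with rfl | ht
    · refine ⟨a, Finset.mem_cons_self a _, fun n hn => ?_⟩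
      rcases Finset.mem_cons.1 hn with rfl | hn
      · exact le_refl _
      · exact absurd hn (by simp)
    · obtain ⟨m, hm, hmin⟩ := ih ht (fun i hi j hj =>
        hc i (Finset.mem_cons_of_mem hi) j (Finset.mem_cons_of_mem hj))
      rcases hc a (Finset.mem_cons_self a t) m (Finset.mem_cons_of_mem hm) with h | h
      · refine ⟨a, Finset.mem_cons_self a t, fun n hn => ?_⟩
        rcases Finset.mem_cons.1 hn with rfl | hn
        · exact le_refl _
        · exact le_trans h (hmin n hn)
      · refine ⟨m, Finset.mem_cons_of_mem hm, fun n hn => ?_⟩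
        rcases Finset.mem_cons.1 hn with rfl | hn
        · exact h
        · exact hmin n hn

/-- **Norberg.** For a `∧`-semilattice `X`, the correspondence
`F ↦ Φ`, `Φ(↓x) = F(x)`, is a well-defined linear isomorphism between the space
`𝔉(X,Y)` of functions constant on `∼`-classes and the space of semi-additive `Y`-valued
set functions on `𝒜₀ = {↓x : x ∈ X}`: it is well defined (each `F` yields a semi-additive
set function, uniquely determined on `𝒜₀`), surjective, and linear. -/
theorem stmt15 {X Y : Type*} [SemilatticeInf X] [AddCommGroup Y] [Module ℝ Y] :
    -- well-defined: every F gives a semi-additive set function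
    (∀ F : X → Y, (∀ a b : X, a ≤ b → b ≤ a → F a = F b) →
      ∃ Φ : Set X → Y, (∀ x : X, Φ (Set.Iic x) = F x) ∧
        SemiAdditive {S : Set X | ∃ x : X, S = Set.Iic x} Φ) ∧
    -- injectivity: F determines Φ on 𝒜₀
    (∀ (F : X → Y) (Φ Ψ : Set X → Y),
      (∀ x : X, Φ (Set.Iic x) = F x) → (∀ x : X, Ψ (Set.Iic x) = F x) →
      ∀ A ∈ {S : Set X | ∃ x : X, S = Set.Iic x}, Φ A = Ψ A) ∧
    -- surjectivity: every semi-additive set function on 𝒜₀ arises from some F ∈ 𝔉(X,Y)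
    (∀ Φ : Set X → Y, SemiAdditive {S : Set X | ∃ x : X, S = Set.Iic x} Φ →
      ∃ F : X → Y, (∀ a b : X, a ≤ b → b ≤ a → F a = F b) ∧
        ∀ x : X, Φ (Set.Iic x) = F x) ∧
    -- linearity of the correspondence
    (∀ (c : ℝ) (F G : X → Y) (Φ Ψ Θ : Set X → Y),
      (∀ x : X, Φ (Set.Iic x) = F x) → (∀ x : X, Ψ (Set.Iic x) = G x) →
      (∀ x : X, Θ (Set.Iic x) = c • F x + G x) →
      ∀ A ∈ {S : Set X | ∃ x : X, S = Set.Iic x}, Θ A = c • Φ A + Ψ A) := by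
  classical
  refine ⟨?_, ?_, ?_, ?_⟩
  · -- well-definedness
    intro F _
    set Φ : Set X → Y := fun S => if h : ∃ x : X, S = Set.Iic x then F h.choose else 0 with hΦdef
    have hΦIic : ∀ x : X, Φ (Set.Iic x) = F x := by
      intro x
      have h : ∃ z : X, Set.Iic x = Set.Iic z := ⟨x, rfl⟩
      have hc : h.choose = x := (Set.Iic_injective h.choose_spec).symm
      simp only [hΦdef, dif_pos h, hc]
    have hΦempty : Φ (∅ : Set X) = 0 := by
      have : ¬ ∃ x : X, (∅ : Set X) = Set.Iic x := by
        rintro ⟨x, hx⟩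
        have : x ∈ (∅ : Set X) := hx ▸ Set.mem_Iic.2 le_rfl
        exact this
      simp only [hΦdef, dif_neg this]
    refine ⟨Φ, hΦIic, Φ, fun A _ => rfl, hΦempty, ?_, ?_⟩
    · -- Cap semi-modularity
      intro _ N hN A hA hU
      rcases (Set.mem_insert_iff.1 hU) with hU0 | ⟨z, hz⟩
      · rw [hU0, hΦempty]
        symm
        apply Finset.sum_eq_zero
        intro b hb
        rw [Finset.mem_filter, Finset.mem_powerset] at hb
        obtain ⟨n₀, hn₀⟩ := Finset.nonempty_iff_ne_empty.2 hb.2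
        have h1 : (⋂ n ∈ b, A n) ⊆ A n₀ := Set.biInter_subset_of_mem hn₀
        have h2 : A n₀ ⊆ ⋃ n ∈ Finset.range N, A n :=
          Set.subset_biUnion_of_mem (hb.1 hn₀)
        have h3 : (⋂ n ∈ b, A n) = ∅ :=
          Set.eq_empty_of_subset_empty (hU0 ▸ h1.trans h2)
        rw [h3, hΦempty, smul_zero]
      · have hzU : z ∈ ⋃ n ∈ Finset.range N, A n := hz ▸ Set.mem_Iic.2 le_rfl
        simp only [Set.mem_iUnion, exists_prop] at hzU
        obtain ⟨m, hmN, hzm⟩ := hzU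
        have hAmU : A m ⊆ ⋃ n ∈ Finset.range N, A n := Set.subset_biUnion_of_mem hmN
        have hAm : A m = Set.Iic z := by
          apply Set.Subset.antisymm (hz ▸ hAmU)
          intro w hw
          rcases Set.mem_insert_iff.1 (hA m hmN) with h0 | ⟨v, hv⟩
          · exact absurd (h0 ▸ hzm) (Set.notMem_empty z)
          · have hzv : z ≤ v := Set.mem_Iic.1 (hv ▸ hzm)
            have hvz : v ≤ z := Set.mem_Iic.1 (hz ▸ hAmU (hv ▸ Set.mem_Iic.2 le_rfl))
            rw [hv]
            exact Set.mem_Iic.2 (le_trans (Set.mem_Iic.1 hw) hzv)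
        have hmax : ∀ n ∈ Finset.range N, A n ⊆ A m := by
          intro n hn
          rw [hAm, ← hz]
          exact Set.subset_biUnion_of_mem hn
        have hkey := key_sum hmN (fun b => Φ (⋂ n ∈ b, A n)) ?_
        · rw [hkey]
          simp only [Finset.mem_singleton, Set.iInter_iInter_eq_left]
          rw [hAm, ← hz]
        · intro b hbN hbne hmb
          have : (⋂ n ∈ insert m b, A n) = ⋂ n ∈ b, A n := by
            rw [Finset.set_biInter_insert]
            apply Set.inter_eq_self_of_subset_right
            obtain ⟨n₀, hn₀⟩ := hbne
            exact (Set.biInter_subset_of_mem hn₀).trans (hmax n₀ (hbN hn₀))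
          exact congrArg Φ this
    · -- Cup semi-modularity
      intro hcup N hN A hA _
      by_cases h0 : ∃ m ∈ Finset.range N, A m = ∅
      · obtain ⟨m, hmN, hm0⟩ := h0
        have hI0 : (⋂ n ∈ Finset.range N, A n) = ∅ :=
          Set.eq_empty_of_subset_empty (hm0 ▸ Set.biInter_subset_of_mem hmN)
        rw [hI0, hΦempty]
        have hkey := key_sum hmN (fun b => Φ (⋃ n ∈ b, A n)) ?_
        · rw [hkey]
          simp only [Finset.mem_singleton, Set.iUnion_iUnion_eq_left]
          rw [hm0, hΦempty]
        · intro b hbN hbne hmb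
          have : (⋃ n ∈ insert m b, A n) = ⋃ n ∈ b, A n := by
            rw [Finset.set_biUnion_insert, hm0, Set.empty_union]
          exact congrArg Φ this
      · push_neg at h0
        have hx : ∀ n ∈ Finset.range N, ∃ z : X, A n = Set.Iic z := by
          intro n hn
          rcases Set.mem_insert_iff.1 (hA n hn) with h | h
          · exact absurd h (h0 n hn).ne_empty
          · exact h
        obtain ⟨z0, _⟩ := hx 0 (Finset.mem_range.2 hN)
        have : Nonempty X := ⟨z0⟩
        set x : ℕ → X := fun n =>
          if h : ∃ z : X, A n = Set.Iic z then h.choose else Classical.arbitrary X with hxdef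
        have hAx : ∀ n ∈ Finset.range N, A n = Set.Iic (x n) := by
          intro n hn
          simp only [hxdef, dif_pos (hx n hn)]
          exact (hx n hn).choose_spec
        have hcomp : ∀ i ∈ Finset.range N, ∀ j ∈ Finset.range N,
            x i ≤ x j ∨ x j ≤ x i := by
          intro i hi j hj
          have hu := hcup.2 (A i) (hA i hi) (A j) (hA j hj)
          rcases Set.mem_insert_iff.1 hu with h | ⟨w, hw⟩
          · exact absurd (h ▸ (Set.mem_union_left _ ((hAx i hi) ▸ Set.mem_Iic.2 le_rfl)))
              (Set.notMem_empty _)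
          · have hiw : x i ≤ w :=
              Set.mem_Iic.1 (hw ▸ Set.mem_union_left _ ((hAx i hi) ▸ Set.mem_Iic.2 le_rfl))
            have hjw : x j ≤ w :=
              Set.mem_Iic.1 (hw ▸ Set.mem_union_right _ ((hAx j hj) ▸ Set.mem_Iic.2 le_rfl))
            have hwin : w ∈ A i ∪ A j := hw ▸ Set.mem_Iic.2 le_rfl
            rcases hwin with h | h
            · exact Or.inr (le_trans hjw (Set.mem_Iic.1 ((hAx i hi) ▸ h)))
            · exact Or.inl (le_trans hiw (Set.mem_Iic.1 ((hAx j hj) ▸ h)))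
        obtain ⟨m, hmN, hmin⟩ := chain_min (Finset.range N)
          (Finset.nonempty_range_iff.2 (by omega)) x hcomp
        have hsub : ∀ n ∈ Finset.range N, A m ⊆ A n := by
          intro n hn
          rw [hAx m hmN, hAx n hn]
          exact Set.Iic_subset_Iic.2 (hmin n hn)
        have hImin : (⋂ n ∈ Finset.range N, A n) = A m := by
          apply Set.Subset.antisymm (Set.biInter_subset_of_mem hmN)
          exact Set.subset_iInter₂ fun n hn => hsub n hn
        have hkey := key_sum hmN (fun b => Φ (⋃ n ∈ b, A n)) ?_
        · rw [hkey, hImin]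
          simp only [Finset.mem_singleton, Set.iUnion_iUnion_eq_left]
        · intro b hbN hbne hmb
          have : (⋃ n ∈ insert m b, A n) = ⋃ n ∈ b, A n := by
            rw [Finset.set_biUnion_insert]
            apply Set.union_eq_self_of_subset_left
            obtain ⟨n₀, hn₀⟩ := hbne
            exact (hsub n₀ (hbN hn₀)).trans (Set.subset_biUnion_of_mem hn₀)
          exact congrArg Φ this
  · rintro F Φ Ψ hΦ hΨ A ⟨x, rfl⟩
    rw [hΦ, hΨ]
  · intro Φ _
    exact ⟨fun x => Φ (Set.Iic x), fun a b h1 h2 => by rw [le_antisymm h1 h2], fun x => rfl⟩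
  · rintro c F G Φ Ψ Θ hΦ hΨ hΘ A ⟨x, rfl⟩
    rw [hΦ, hΨ, hΘ]
end

section
/- Let Y₁,…,Y_N be nonnegative real-valued functions on a set Ω, set Z₀ = 0 and Z_n = Σ_{j=1}^n Y_j, and let k ≥ 0 be a real number. Then pointwise on Ω: Z_N · 1_{{Z_N > 2k}} ≤ 3 Σ_{n=1}^N Y_n · 1_{{Z_n > k}}. -/
open Finset

/-!
Every increment `Y_n` made after the partial sums first exceed `k` is counted on the right, so
for `k ≥ 0` the right-hand sum (without the factor 3) is at least `Z_N - k`, which is more than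
`Z_N / 2` wherever `Z_N > 2k`.
-/

section PartialSums

variable {α : Type*} [AddCommGroup α] [LinearOrder α] [IsOrderedAddMonoid α]

theorem sum_Icc_ite_lt_partialSum_nonneg {y : ℕ → α} {N : ℕ}
    (hy : ∀ n ∈ Finset.Icc 1 N, 0 ≤ y n) (k : α) :
    0 ≤ ∑ n ∈ Finset.Icc 1 N, if k < ∑ j ∈ Finset.Icc 1 n, y j then y n else 0 :=
  sum_nonneg fun n hn => by split_ifs <;> simp [hy n hn]

theorem partialSum_sub_le_sum_Icc_ite_lt {y : ℕ → α} {N : ℕ}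
    (hy : ∀ n ∈ Finset.Icc 1 N, 0 ≤ y n) {k : α} (hk : 0 ≤ k) :
    ∑ j ∈ Finset.Icc 1 N, y j - k ≤
      ∑ n ∈ Finset.Icc 1 N, if k < ∑ j ∈ Finset.Icc 1 n, y j then y n else 0 := by
  induction N with
  | zero => simpa using hk
  | succ N ih =>
    have hy' : ∀ n ∈ Finset.Icc 1 N, 0 ≤ y n := fun n hn =>
      hy n (Finset.Icc_subset_Icc_right N.le_succ hn)
    rw [sum_Icc_succ_top (by omega), sum_Icc_succ_top (by omega)]
    split_ifs with h
    · calc ∑ j ∈ Finset.Icc 1 N, y j + y (N + 1) - k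
          = (∑ j ∈ Finset.Icc 1 N, y j - k) + y (N + 1) := by abel
        _ ≤ _ := add_le_add_left (ih hy') _
    · rw [sum_Icc_succ_top (by omega)] at h
      rw [add_zero]
      exact (sub_nonpos.2 (not_lt.1 h)).trans (sum_Icc_ite_lt_partialSum_nonneg hy' k)

end PartialSums

/-- If `Y₁,…,Y_N ≥ 0`, `Z_n = Σ_{j=1}^n Y_j` and `k ≥ 0`, then pointwise
`Z_N · 1_{Z_N > 2k} ≤ 3 Σ_{n=1}^N Y_n · 1_{Z_n > k}`. -/
theorem stmt19 {Ω : Type*} (N : ℕ) (Y : ℕ → Ω → ℝ)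
    (hY : ∀ n ∈ Finset.Icc 1 N, ∀ ω : Ω, 0 ≤ Y n ω)
    (k : ℝ) (hk : 0 ≤ k) (ω : Ω) :
    Set.indicator {ω' : Ω | 2 * k < ∑ j ∈ Finset.Icc 1 N, Y j ω'}
        (fun ω' => ∑ j ∈ Finset.Icc 1 N, Y j ω') ω ≤
      3 * ∑ n ∈ Finset.Icc 1 N,
        Set.indicator {ω' : Ω | k < ∑ j ∈ Finset.Icc 1 n, Y j ω'} (Y n) ω := by
  have hy : ∀ n ∈ Finset.Icc 1 N, 0 ≤ Y n ω := fun n hn => hY n hn ω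
  have hR := sum_Icc_ite_lt_partialSum_nonneg hy k
  simp only [Set.indicator_apply, Set.mem_ofPred_eq]
  split_ifs with hZ
  · have hkey := partialSum_sub_le_sum_Icc_ite_lt hy hk
    linarith
  · linarith
end
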